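/- arXiv:2204.02578 — 6 statements merged into one kernel-verified Lean document; each statement's English description precedes it below -/
import Mathlib

section
/- Let A be a primitive axial algebra of Jordan type 1/2 over a field F of characteristic not 2, and let a, b be primitive axes in A with α = (a,b) the value of the Frobenius form. Write b = a_0(b) + a_{1/2}(b) + α·a with a_0(b) ∈ A_0(a) and a_{1/2}(b) ∈ A_{1/2}(a). Then: (1) a_0(b)² = (1−α)·a_0(b); (2) a_{1/2}(b)² = α·a_0(b) + (α−α²)·a; (3) a_0(b)·a_{1/2}(b) = (1/2)(1−α)·a_{1/2}(b). -/
/-! Common framework: commutative, not-necessarily-associative, not-necessarily-unital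
algebras over a field `F` of characteristic not 2; primitive axes of Jordan type 1/2;
Frobenius forms; axial algebras of Jordan type 1/2. -/

namespace AxialPaper

variable (F : Type*) [Field F] {A : Type*} [NonUnitalNonAssocCommRing A]
  [Module F A] [SMulCommClass F A A] [IsScalarTower F A A]

/-- The `lam`-eigenvectors of `ad_e : x ↦ e * x` that lie in a subset `S ⊆ A`
(taking `S = Set.univ` recovers the eigenspace `A_lam(e)` of the whole algebra). -/
def evecIn (S : Set A) (e : A) (lam : F) : Set A :=
  {x ∈ S | e * x = lam • x}

/-- The eigenspace `A_lam(e) = {x | e * x = lam • x}`, as a submodule. -/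
def evecSub (e : A) (lam : F) : Submodule F A where
  carrier := {x | e * x = lam • x}
  add_mem' := by
    intro x y hx hy
    simp only [Set.mem_setOf_eq] at *
    rw [mul_add, hx, hy, smul_add]
  zero_mem' := by simp
  smul_mem' := by
    intro c x hx
    simp only [Set.mem_setOf_eq] at *
    rw [mul_smul_comm, hx, smul_comm]

/-- `e` is a primitive axis of Jordan type `1/2` of the (sub)algebra with underlying set `S`:
`e` is an idempotent belonging to `S`, the multiplication operator `ad_e` is diagonalizable
on `S` with eigenvalues in `{0, 1/2, 1}`, the `1`-eigenspace of `S` is spanned by `e`,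
and the fusion rules hold inside `S`.  Taking `S = Set.univ` gives the notion of a
primitive axis of the whole algebra `A`. -/
structure IsPrimitiveAxisIn (S : Set A) (e : A) : Prop where
  mem : e ∈ S
  idem : e * e = e
  decomp : ∀ x ∈ S, ∃ x0 ∈ evecIn F S e 0, ∃ xh ∈ evecIn F S e (2⁻¹ : F),
      ∃ x1 ∈ evecIn F S e 1, x = x0 + xh + x1
  prim : ∀ x ∈ evecIn F S e 1, ∃ c : F, x = c • e
  fusion00 : ∀ x ∈ evecIn F S e 0, ∀ y ∈ evecIn F S e 0, x * y ∈ evecIn F S e 0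
  fusionhh : ∀ x ∈ evecIn F S e (2⁻¹ : F), ∀ y ∈ evecIn F S e (2⁻¹ : F),
      ∃ z0 ∈ evecIn F S e 0, ∃ z1 ∈ evecIn F S e 1, x * y = z0 + z1
  fusion0h : ∀ x ∈ evecIn F S e 0, ∀ y ∈ evecIn F S e (2⁻¹ : F),
      x * y ∈ evecIn F S e (2⁻¹ : F)
  fusion1h : ∀ x ∈ evecIn F S e 1, ∀ y ∈ evecIn F S e (2⁻¹ : F),
      x * y ∈ evecIn F S e (2⁻¹ : F)
  fusion01 : ∀ x ∈ evecIn F S e 0, ∀ y ∈ evecIn F S e 1, x * y = 0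

/-- A primitive axis (of Jordan type 1/2) of the whole algebra `A`. -/
abbrev IsPrimitiveAxis (e : A) : Prop := IsPrimitiveAxisIn F Set.univ e

/-- A primitive semisimple idempotent whose eigenvalues lie in `{0, 1/2, 1}`
(no fusion rules required). -/
def IsPrimSemisimpleIdem (e : A) : Prop :=
  e * e = e ∧
  (∀ x : A, ∃ x0 ∈ evecIn F (Set.univ : Set A) e 0,
      ∃ xh ∈ evecIn F (Set.univ : Set A) e (2⁻¹ : F),
      ∃ x1 ∈ evecIn F (Set.univ : Set A) e 1, x = x0 + xh + x1) ∧
  (∀ x ∈ evecIn F (Set.univ : Set A) e 1, ∃ c : F, x = c • e)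

variable (A) in
/-- `A` is a (primitive) axial algebra of Jordan type `1/2`: it is generated, as a
nonunital nonassociative algebra, by a set of primitive axes. -/
def IsAxialJordanHalf : Prop :=
  ∃ S : Set A, (∀ a ∈ S, IsPrimitiveAxis F a) ∧ NonUnitalAlgebra.adjoin F S = ⊤

/-- `Bf` is a Frobenius form: a nonzero symmetric invariant bilinear form with
`(a, a) = 1` for every primitive axis `a`. -/
def IsFrobeniusForm (Bf : A →ₗ[F] A →ₗ[F] F) : Prop :=
  Bf ≠ 0 ∧ (∀ x y : A, Bf x y = Bf y x) ∧ (∀ x y z : A, Bf (x * y) z = Bf x (y * z)) ∧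
    (∀ e : A, IsPrimitiveAxis F e → Bf e e = 1)

/-- Quasi-definiteness: `(a, b) = 1` for primitive axes `a, b` implies `a = b`. -/
def QuasiDefinite (Bf : A →ₗ[F] A →ₗ[F] F) : Prop :=
  ∀ a b : A, IsPrimitiveAxis F a → IsPrimitiveAxis F b → Bf a b = 1 → a = b

variable (A) in
/-- Strong axiality: every primitive semisimple idempotent with eigenvalues in
`{0, 1/2, 1}` is a primitive axis. -/
def StronglyAxial : Prop :=
  ∀ e : A, IsPrimSemisimpleIdem F e → IsPrimitiveAxis F e

/-- The element `x_a(b) = (2ab − (a,b)a − b)/((a,b) − 1)`. -/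
def xab (Bf : A →ₗ[F] A →ₗ[F] F) (a b : A) : A :=
  (Bf a b - 1)⁻¹ • ((2 : F) • (a * b) - Bf a b • a - b)

end AxialPaper

/-
Write `α = (a, b)`.  Expanding `b * b = b` along the eigenspaces of `ad_a` and comparing
components gives `b₀² + z₀ = b₀`, `2 b₀ b_h + α b_h = b_h` and `z₁ + α² a = α a`, where
`b_h² = z₀ + z₁` is the splitting of `b_h²` given by the fusion rule.  The missing relation `z₀ = α b₀` comes from the
other axis: since the Frobenius form makes the `1`-component of any `x` with respect to `b`
equal to `(b, x) b`, we have `2 b(bx) − bx = (b, x) b`, and evaluating both sides at `x = a`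
in terms of the components of `b` pins down `z₀`.
-/

namespace AxialPaper

variable {F : Type*} [Field F] {A : Type*} [NonUnitalNonAssocCommRing A] [Module F A]

theorem IsFrobeniusForm.apply_eq_zero_of_mul_eq_smul {Bf : A →ₗ[F] A →ₗ[F] F}
    (hB : IsFrobeniusForm F Bf) {e y : A} {μ : F} (he : e * e = e) (hy : e * y = μ • y)
    (hμ : μ ≠ 1) : Bf e y = 0 := by
  have h : Bf e y = μ * Bf e y :=
    calc Bf e y = Bf (e * e) y := by rw [he]
      _ = Bf e (e * y) := hB.2.2.1 e e y
      _ = μ * Bf e y := by rw [hy, map_smul, smul_eq_mul]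
  have : (1 - μ) * Bf e y = 0 := by linear_combination h
  exact (mul_eq_zero.mp this).resolve_left (sub_ne_zero.mpr (Ne.symm hμ))

variable [SMulCommClass F A A]

theorem eigencomponents_eq_zero (h2 : (2 : F) ≠ 0) {a x0 xh x1 : A} (h0 : a * x0 = 0)
    (hh : a * xh = (2⁻¹ : F) • xh) (h1 : a * x1 = x1) (hs : x0 + xh + x1 = 0) :
    x0 = 0 ∧ xh = 0 ∧ x1 = 0 := by
  have e1 : (2⁻¹ : F) • xh + x1 = 0 := by
    simpa [mul_add, h0, hh, h1] using congrArg (a * ·) hs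
  have e2 : (2⁻¹ * 2⁻¹ : F) • xh + x1 = 0 := by
    simpa [mul_add, mul_smul_comm, hh, h1, smul_smul] using congrArg (a * ·) e1
  have hxh : xh = 0 := by
    have h4 : (2⁻¹ * 2⁻¹ : F) • xh = 0 := by
      linear_combination (norm := skip) e1 - e2
      match_scalars <;> field_simp <;> ring
    simpa [h2] using h4
  have hx1 : x1 = 0 := by simpa [hxh] using e1
  exact ⟨by simpa [hxh, hx1] using hs, hxh, hx1⟩

theorem IsPrimitiveAxis.two_smul_mul_mul_sub_mul (h2 : (2 : F) ≠ 0) {Bf : A →ₗ[F] A →ₗ[F] F}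
    (hB : IsFrobeniusForm F Bf) {b : A} (hb : IsPrimitiveAxis F b) (x : A) :
    (2 : F) • (b * (b * x)) - b * x = Bf b x • b := by
  obtain ⟨x0, hx0, xh, hxh, x1, hx1, rfl⟩ := hb.decomp x (Set.mem_univ x)
  obtain ⟨c, rfl⟩ := hb.prim x1 hx1
  have hbx0 : b * x0 = 0 := by simpa using hx0.2
  have hhalf : (2⁻¹ : F) ≠ 1 := by
    intro h
    have h11 : (1 : F) + 1 = 1 := by rw [one_add_one_eq_two, ← inv_eq_one, h]
    simp at h11
  have hc : Bf b (x0 + xh + c • b) = c := by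
    rw [map_add, map_add, map_smul, hB.apply_eq_zero_of_mul_eq_smul hb.idem hx0.2 zero_ne_one,
      hB.apply_eq_zero_of_mul_eq_smul hb.idem hxh.2 hhalf, hB.2.2.2 b hb]
    simp
  rw [hc]
  simp only [mul_add, mul_smul_comm, hbx0, hxh.2, hb.idem, smul_smul, zero_add]
  match_scalars <;> field_simp <;> ring

variable [IsScalarTower F A A]

theorem IsPrimitiveAxis.components_of_mul_self_eq (h2 : (2 : F) ≠ 0)
    {a b b0 bh z0 z1 : A} {α : F} (ha : IsPrimitiveAxis F a) (hb : b * b = b)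
    (hb0 : b0 ∈ evecIn F (Set.univ : Set A) a 0)
    (hbh : bh ∈ evecIn F (Set.univ : Set A) a (2⁻¹ : F))
    (hz0 : z0 ∈ evecIn F (Set.univ : Set A) a 0) (hz1 : z1 ∈ evecIn F (Set.univ : Set A) a 1)
    (hsq : bh * bh = z0 + z1) (hdec : b = b0 + bh + α • a) :
    b0 * b0 = b0 - z0 ∧ b0 * bh = (2⁻¹ * (1 - α)) • bh ∧ z1 = (α - α ^ 2) • a := by
  have hab0 : a * b0 = 0 := by simpa using hb0.2
  have habh : a * bh = (2⁻¹ : F) • bh := hbh.2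
  have hsplit : (b0 * b0 + z0 - b0) + ((2 : F) • (b0 * bh) + α • bh - bh)
      + (z1 + (α * α) • a - α • a) = 0 := by
    have hexp : b * b = b0 * b0 + bh * bh + (2 : F) • (b0 * bh) + α • bh + (α * α) • a := by
      rw [hdec]
      simp only [mul_add, add_mul, mul_smul_comm, smul_mul_assoc, ha.idem, hab0, habh,
        mul_comm bh b0, mul_comm b0 a, mul_comm bh a, smul_smul, smul_zero, add_zero]
      match_scalars <;> field_simp <;> ring
    rw [hexp, hsq, hdec] at hb
    linear_combination (norm := module) hb
  have h0 : a * (b0 * b0 + z0 - b0) = 0 := by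
    simp [mul_sub, mul_add, (ha.fusion00 b0 hb0 b0 hb0).2, hz0.2, hab0]
  have hh : a * ((2 : F) • (b0 * bh) + α • bh - bh)
      = (2⁻¹ : F) • ((2 : F) • (b0 * bh) + α • bh - bh) := by
    rw [mul_sub, mul_add, mul_smul_comm, mul_smul_comm, (ha.fusion0h b0 hb0 bh hbh).2, habh]
    module
  have h1 : a * (z1 + (α * α) • a - α • a) = z1 + (α * α) • a - α • a := by
    simpa [mul_sub, mul_add, mul_smul_comm, ha.idem] using hz1.2
  obtain ⟨e0, eh, e1⟩ := eigencomponents_eq_zero h2 h0 hh h1 hsplit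
  refine ⟨by linear_combination (norm := module) e0, ?_,
    by linear_combination (norm := module) e1⟩
  have h2bh : (2 : F) • (b0 * bh) = (1 - α) • bh := by linear_combination (norm := module) eh
  calc b0 * bh = (2⁻¹ : F) • (2 : F) • (b0 * bh) := by
        rw [smul_smul, inv_mul_cancel₀ h2, one_smul]
    _ = (2⁻¹ * (1 - α)) • bh := by rw [h2bh, smul_smul]

theorem IsPrimitiveAxis.fusion_zero_part_eq_smul (h2 : (2 : F) ≠ 0)
    {Bf : A →ₗ[F] A →ₗ[F] F} (hB : IsFrobeniusForm F Bf) {a b b0 bh z0 z1 : A}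
    (hb : IsPrimitiveAxis F b) (ha : a * a = a) (hab0 : a * b0 = 0)
    (habh : a * bh = (2⁻¹ : F) • bh) (hsq : bh * bh = z0 + z1)
    (hprod : b0 * bh = (2⁻¹ * (1 - Bf a b)) • bh) (hz1 : z1 = (Bf a b - Bf a b ^ 2) • a)
    (hdec : b = b0 + bh + Bf a b • a) :
    z0 = Bf a b • b0 := by
  set α := Bf a b
  have hα : Bf b a = α := hB.2.1 b a
  have hba : b * a = (2⁻¹ : F) • bh + α • a := by
    rw [hdec, add_mul, add_mul, mul_comm b0, mul_comm bh, hab0, habh, smul_mul_assoc, ha,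
      zero_add]
  have hbbh : b * bh = z0 + (2⁻¹ : F) • bh + (α - α ^ 2) • a := by
    rw [hdec, add_mul, add_mul, hprod, hsq, hz1, smul_mul_assoc, habh, smul_smul]
    module
  have key := hb.two_smul_mul_mul_sub_mul h2 hB a
  rw [hα, hba, mul_add, mul_smul_comm, mul_smul_comm, hbbh, hba, hdec] at key
  linear_combination (norm := skip) key
  match_scalars <;> field_simp <;> ring

end AxialPaper

open AxialPaper in
theorem stmt0_general {F : Type*} [Field F] {A : Type*} [NonUnitalNonAssocCommRing A]
    [Module F A] [SMulCommClass F A A] [IsScalarTower F A A]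
    (h2 : (2 : F) ≠ 0)
    (Bf : A →ₗ[F] A →ₗ[F] F) (hB : IsFrobeniusForm F Bf)
    (a b : A) (ha : IsPrimitiveAxis F a) (hb : IsPrimitiveAxis F b)
    (b0 bh : A)
    (hb0 : b0 ∈ evecIn F (Set.univ : Set A) a 0)
    (hbh : bh ∈ evecIn F (Set.univ : Set A) a (2⁻¹ : F))
    (hdec : b = b0 + bh + Bf a b • a) :
    b0 * b0 = (1 - Bf a b) • b0 ∧
    bh * bh = Bf a b • b0 + (Bf a b - Bf a b ^ 2) • a ∧
    b0 * bh = (2⁻¹ * (1 - Bf a b)) • bh := by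
  obtain ⟨z0, hz0, z1, hz1, hsq⟩ := ha.fusionhh bh hbh bh hbh
  obtain ⟨hb0sq, hprod, hz1a⟩ :=
    ha.components_of_mul_self_eq h2 hb.idem hb0 hbh hz0 hz1 hsq hdec
  have hz0b0 : z0 = Bf a b • b0 :=
    hb.fusion_zero_part_eq_smul h2 hB ha.idem (by simpa using hb0.2) hbh.2 hsq hprod hz1a hdec
  refine ⟨?_, by rw [hsq, hz0b0, hz1a], hprod⟩
  rw [hb0sq, hz0b0]
  module

open AxialPaper in
/-- Lemma `help`: components of a second axis relative to a first one. -/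
theorem stmt0 {F : Type*} [Field F] {A : Type*} [NonUnitalNonAssocCommRing A]
    [Module F A] [SMulCommClass F A A] [IsScalarTower F A A]
    (h2 : (2 : F) ≠ 0)
    (hA : IsAxialJordanHalf F A)
    (Bf : A →ₗ[F] A →ₗ[F] F) (hB : IsFrobeniusForm F Bf)
    (a b : A) (ha : IsPrimitiveAxis F a) (hb : IsPrimitiveAxis F b)
    (b0 bh : A)
    (hb0 : b0 ∈ evecIn F (Set.univ : Set A) a 0)
    (hbh : bh ∈ evecIn F (Set.univ : Set A) a (2⁻¹ : F))
    (hdec : b = b0 + bh + Bf a b • a) :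
    b0 * b0 = (1 - Bf a b) • b0 ∧
    bh * bh = Bf a b • b0 + (Bf a b - Bf a b ^ 2) • a ∧
    b0 * bh = (2⁻¹ * (1 - Bf a b)) • bh :=
  stmt0_general h2 Bf hB a b ha hb b0 bh hb0 hbh hdec
end

section
/- Every definite primitive axial algebra of Jordan type 1/2 (over a field of characteristic not 2) is quasi-definite; that is, if the Frobenius form is anisotropic, then (a, b) = 1 for primitive axes a, b implies a = b. -/
theorem LinearMap.eq_of_apply_self_eq_of_anisotropic {R M : Type*} [CommRing R] [AddCommGroup M]
    [Module R M] (B : M →ₗ[R] M →ₗ[R] R) (hsymm : ∀ x y, B x y = B y x)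
    (haniso : ∀ x, B x x = 0 → x = 0) {a b : M} (ha : B a a = B a b) (hb : B b b = B a b) :
    a = b := by
  have hsq : B (a - b) (a - b) = 0 := by
    simp only [map_sub, LinearMap.sub_apply, ha, hb, hsymm b a]
    ring
  exact sub_eq_zero.mp (haniso _ hsq)

open AxialPaper in
theorem stmt3_general {F : Type*} [Field F] {A : Type*} [NonUnitalNonAssocCommRing A]
    [Module F A] [SMulCommClass F A A] [IsScalarTower F A A]
    (Bf : A →ₗ[F] A →ₗ[F] F) (hB : IsFrobeniusForm F Bf)
    (haniso : ∀ x : A, Bf x x = 0 → x = 0) :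
    QuasiDefinite F Bf := by
  intro a b ha hb hab
  obtain ⟨-, hsymm, -, hunit⟩ := hB
  exact Bf.eq_of_apply_self_eq_of_anisotropic hsymm haniso
    (by rw [hunit a ha, hab]) (by rw [hunit b hb, hab])

open AxialPaper in
/-- Lemma `an`: every definite (anisotropic) axial algebra of Jordan
type 1/2 is quasi-definite. -/
theorem stmt3 {F : Type*} [Field F] {A : Type*} [NonUnitalNonAssocCommRing A]
    [Module F A] [SMulCommClass F A A] [IsScalarTower F A A]
    (h2 : (2 : F) ≠ 0)
    (hA : IsAxialJordanHalf F A)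
    (Bf : A →ₗ[F] A →ₗ[F] F) (hB : IsFrobeniusForm F Bf)
    (haniso : ∀ x : A, Bf x x = 0 → x = 0) :
    QuasiDefinite F Bf :=
  stmt3_general Bf hB haniso
end

section
/- Let F be an infinite field of characteristic not 2. Then M_n(F), equipped with the Jordan product X ∘ Y = (XY + YX)/2, has a quasi-definite linear basis consisting of primitive axes: there exists a basis H_1, …, H_{n²} of M_n(F) such that each H_i satisfies H_i² = H_i and rank H_i = 1 (equivalently, each H_i is a primitive axis), tr(H_i H_i) = 1 for all i, and tr(H_i H_j) ≠ 1 for all i ≠ j. -/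
/-!
For `i ≠ j` take the rank-one idempotent `H_ij = (e_i + t e_j)(e_i + s e_j)ᵀ / (1 + st)`, and
`H_ii = E_ii`. Modulo the diagonal units, `H_ij` and `H_ji` contribute `s E_ij + t E_ji` and
`s E_ji + t E_ij`, so the `H_p` span `M_n(F)` as soon as `s² ≠ t²`. For rank-one idempotents
`uvᵀ/(v·u)` and `xyᵀ/(y·x)` the trace of the product is `(v·x)(y·u)/((v·u)(y·x))`; running
through the coincidence patterns of the indices shows that for `p ≠ q` the value of
`tr(H_p H_q)` is one of `0, 1/d, st/d, 1/d², st/d², (st/d)², ((s+t)/d)²` with `d = 1 + st`.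
None of these is `1` for generic `s, t`, and an infinite field has generic elements
(e.g. `t = s²` with `s` avoiding the roots of one nonzero polynomial).
-/

open Matrix Polynomial

namespace Matrix

variable {K : Type*} [Field K] {m n : Type*} [Fintype n]

theorem rank_pos_of_ne_zero [Fintype m] [DecidableEq n] {A : Matrix m n K} (hA : A ≠ 0) :
    0 < A.rank := by
  obtain ⟨j, hj⟩ : ∃ j, A.col j ≠ 0 := by
    by_contra! h
    exact hA (Matrix.ext fun i j => congrFun (h j) i)
  rw [rank, Module.finrank_pos_iff_exists_ne_zero]
  exact ⟨⟨A *ᵥ Pi.single j 1, LinearMap.mem_range_self A.mulVecLin _⟩, by simpa using hj⟩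

def rankOneIdempotent (u v : n → K) : Matrix n n K := (v ⬝ᵥ u)⁻¹ • vecMulVec u v

variable {u v : n → K}

theorem trace_rankOneIdempotent_mul (u v x y : n → K) :
    trace (rankOneIdempotent u v * rankOneIdempotent x y) =
      (v ⬝ᵥ x) * (y ⬝ᵥ u) / ((v ⬝ᵥ u) * (y ⬝ᵥ x)) := by
  simp only [rankOneIdempotent, smul_mul_smul_comm, vecMulVec_mul_vecMulVec, trace_smul,
    trace_vecMulVec, dotProduct_smul, smul_eq_mul, dotProduct_comm u y]
  ring

theorem rankOneIdempotent_mul_self (h : v ⬝ᵥ u ≠ 0) :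
    rankOneIdempotent u v * rankOneIdempotent u v = rankOneIdempotent u v := by
  simp only [rankOneIdempotent, smul_mul_smul_comm, vecMulVec_mul_vecMulVec, vecMulVec_smul,
    smul_smul]
  congr 1
  field_simp

theorem trace_rankOneIdempotent (h : v ⬝ᵥ u ≠ 0) : trace (rankOneIdempotent u v) = 1 := by
  rw [rankOneIdempotent, trace_smul, trace_vecMulVec, dotProduct_comm u v, smul_eq_mul,
    inv_mul_cancel₀ h]

theorem rank_rankOneIdempotent [DecidableEq n] (h : v ⬝ᵥ u ≠ 0) :
    (rankOneIdempotent u v).rank = 1 := by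
  refine le_antisymm ?_ (rank_pos_of_ne_zero fun h0 => ?_)
  · rw [rankOneIdempotent, ← smul_vecMulVec]
    exact rank_vecMulVec_le _ _
  · simpa [h0] using trace_rankOneIdempotent h

end Matrix

theorem Polynomial.exists_eval_ne_zero {R : Type*} [CommRing R] [IsDomain R] [Infinite R]
    {p : R[X]} (hp : p ≠ 0) : ∃ x, p.eval x ≠ 0 := by
  by_contra! h
  exact hp (Polynomial.funext (by simpa using h))

section QuasiAxis

variable {F : Type*} [Field F] {ι : Type*} [Fintype ι] [DecidableEq ι]

def quasiAxisVec (c : F) (p : ι × ι) : ι → F :=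
  Pi.single p.1 1 + (if p.1 = p.2 then 0 else c) • Pi.single p.2 1

def quasiAxis (s t : F) (p : ι × ι) : Matrix ι ι F :=
  rankOneIdempotent (quasiAxisVec t p) (quasiAxisVec s p)

theorem quasiAxisVec_dotProduct_quasiAxisVec (s t : F) (i j k l : ι) :
    quasiAxisVec s (i, j) ⬝ᵥ quasiAxisVec t (k, l) =
      (if i = k then 1 else 0) + (if k = l then 0 else t) * (if i = l then 1 else 0) +
        (if i = j then 0 else s) * (if j = k then 1 else 0) +
        (if i = j then 0 else s) * (if k = l then 0 else t) * (if j = l then 1 else 0) := by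
  simp only [quasiAxisVec, add_dotProduct, dotProduct_add, smul_dotProduct, dotProduct_smul,
    single_dotProduct, Pi.single_apply, smul_eq_mul]
  ring

variable {s t : F}

theorem quasiAxisVec_dotProduct_self_ne_zero (hd : 1 + s * t ≠ 0) (p : ι × ι) :
    quasiAxisVec s p ⬝ᵥ quasiAxisVec t p ≠ 0 := by
  obtain ⟨i, j⟩ := p
  rcases eq_or_ne i j with rfl | hij
  · simp [quasiAxisVec_dotProduct_quasiAxisVec]
  · simp [quasiAxisVec_dotProduct_quasiAxisVec, hij, hij.symm, hd]

theorem quasiAxisVec_dotProduct_mul_dotProduct_ne (hd : 1 + s * t ≠ 0)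
    (h₁ : (1 + s * t) ^ 2 ≠ 1) (h₂ : (1 + s * t) ^ 2 ≠ s * t) (h₃ : (1 + s * t) ^ 2 ≠ (s * t) ^ 2)
    (h₄ : (1 + s * t) ^ 2 ≠ (s + t) ^ 2) {p q : ι × ι} (hpq : p ≠ q) :
    (quasiAxisVec s p ⬝ᵥ quasiAxisVec t q) * (quasiAxisVec s q ⬝ᵥ quasiAxisVec t p) ≠
      (quasiAxisVec s p ⬝ᵥ quasiAxisVec t p) * (quasiAxisVec s q ⬝ᵥ quasiAxisVec t q) := by
  have hst : s * t ≠ 0 := fun h => h₁ (by rw [h]; ring)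
  have hs : s ≠ 0 := left_ne_zero_of_mul hst
  have ht : t ≠ 0 := right_ne_zero_of_mul hst
  obtain ⟨i, j⟩ := p
  obtain ⟨k, l⟩ := q
  simp only [quasiAxisVec_dotProduct_quasiAxisVec]
  -- Each coincidence pattern of `i, j, k, l` leaves an identity among
  -- `0, 1, st, (st)², (s + t)², d, d²` (with `d = 1 + st`) that one of the hypotheses rules out.
  by_cases hij : i = j <;> by_cases hkl : k = l <;> by_cases hik : i = k <;>
    by_cases hil : i = l <;> by_cases hjk : j = k <;> by_cases hjl : j = l <;>
    subst_vars <;> simp [*, eq_comm] at hpq ⊢ <;> grind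

theorem trace_quasiAxis_mul_ne_one (hd : 1 + s * t ≠ 0) (h₁ : (1 + s * t) ^ 2 ≠ 1)
    (h₂ : (1 + s * t) ^ 2 ≠ s * t) (h₃ : (1 + s * t) ^ 2 ≠ (s * t) ^ 2)
    (h₄ : (1 + s * t) ^ 2 ≠ (s + t) ^ 2) {p q : ι × ι} (hpq : p ≠ q) :
    trace (quasiAxis s t p * quasiAxis s t q) ≠ 1 := by
  rw [quasiAxis, quasiAxis, trace_rankOneIdempotent_mul, Ne, div_eq_one_iff_eq
    (mul_ne_zero (quasiAxisVec_dotProduct_self_ne_zero hd p)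
      (quasiAxisVec_dotProduct_self_ne_zero hd q))]
  exact quasiAxisVec_dotProduct_mul_dotProduct_ne hd h₁ h₂ h₃ h₄ hpq

theorem quasiAxis_self (s t : F) (i : ι) : quasiAxis s t (i, i) = single i i 1 := by
  simp [quasiAxis, rankOneIdempotent, quasiAxisVec, single_eq_single_vecMulVec_single]

theorem smul_quasiAxis_of_ne (hd : 1 + s * t ≠ 0) {i j : ι} (hij : i ≠ j) :
    (1 + s * t) • quasiAxis s t (i, j) =
      single i i 1 + s • single i j 1 + t • single j i 1 + (s * t) • single j j 1 := by
  have hdot : quasiAxisVec s (i, j) ⬝ᵥ quasiAxisVec t (i, j) = 1 + s * t := by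
    simp [quasiAxisVec_dotProduct_quasiAxisVec, hij, hij.symm]
  rw [quasiAxis, rankOneIdempotent, hdot, smul_smul, mul_inv_cancel₀ hd, one_smul]
  simp only [quasiAxisVec, if_neg hij, vecMulVec_add, add_vecMulVec, vecMulVec_smul,
    smul_vecMulVec, ← single_eq_single_vecMulVec_single]
  module

theorem single_mem_span_quasiAxis (hd : 1 + s * t ≠ 0) (hst : s ^ 2 ≠ t ^ 2) (i j : ι) :
    (single i j 1 : Matrix ι ι F) ∈ Submodule.span F (Set.range (quasiAxis s t)) := by
  set V := Submodule.span F (Set.range (quasiAxis (ι := ι) s t))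
  have hmem (p : ι × ι) : quasiAxis s t p ∈ V := Submodule.subset_span ⟨p, rfl⟩
  rcases eq_or_ne i j with rfl | hij
  · exact quasiAxis_self s t i ▸ hmem (i, i)
  have hoff {i j : ι} (hij : i ≠ j) : s • single i j (1 : F) + t • single j i 1 ∈ V := by
    have : s • single i j (1 : F) + t • single j i 1 = (1 + s * t) • quasiAxis s t (i, j) -
        quasiAxis s t (i, i) - (s * t) • quasiAxis s t (j, j) := by
      rw [smul_quasiAxis_of_ne hd hij, quasiAxis_self, quasiAxis_self]
      abel
    rw [this]
    exact V.sub_mem (V.sub_mem (V.smul_mem _ (hmem _)) (hmem _)) (V.smul_mem _ (hmem _))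
  have : single i j (1 : F) = (s ^ 2 - t ^ 2)⁻¹ • (s • (s • single i j 1 + t • single j i 1) -
      t • (s • single j i 1 + t • single i j 1)) := by
    rw [← sub_ne_zero] at hst
    match_scalars <;> field_simp; ring
  rw [this]
  exact V.smul_mem _ (V.sub_mem (V.smul_mem _ (hoff hij)) (V.smul_mem _ (hoff hij.symm)))

theorem span_quasiAxis_eq_top (hd : 1 + s * t ≠ 0) (hst : s ^ 2 ≠ t ^ 2) :
    Submodule.span F (Set.range (quasiAxis s t)) = (⊤ : Submodule F (Matrix ι ι F)) := by
  refine eq_top_iff.2 ((Matrix.stdBasis F ι ι).span_eq ▸ Submodule.span_le.2 ?_)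
  rintro _ ⟨⟨i, j⟩, rfl⟩
  rw [stdBasis_eq_single]
  exact single_mem_span_quasiAxis hd hst i j

variable (ι) in
noncomputable def quasiAxisBasis (hd : 1 + s * t ≠ 0) (hst : s ^ 2 ≠ t ^ 2) :
    Module.Basis (ι × ι) F (Matrix ι ι F) :=
  basisOfTopLeSpanOfCardEqFinrank (quasiAxis s t) (span_quasiAxis_eq_top hd hst).ge
    (by simp [Module.finrank_matrix])

theorem coe_quasiAxisBasis (hd : 1 + s * t ≠ 0) (hst : s ^ 2 ≠ t ^ 2) :
    ⇑(quasiAxisBasis ι hd hst) = quasiAxis s t :=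
  coe_basisOfTopLeSpanOfCardEqFinrank _ _ _

end QuasiAxis

theorem exists_quasiAxis_params (F : Type*) [Field F] [Infinite F] :
    ∃ s t : F, 1 + s * t ≠ 0 ∧ (1 + s * t) ^ 2 ≠ 1 ∧ (1 + s * t) ^ 2 ≠ s * t ∧
      (1 + s * t) ^ 2 ≠ (s * t) ^ 2 ∧ (1 + s * t) ^ 2 ≠ (s + t) ^ 2 ∧ s ^ 2 ≠ t ^ 2 := by
  have h₀ (p : F[X]) (hp : p.eval 0 ≠ 0) : p ≠ 0 := fun h => hp (by simp [h])
  obtain ⟨s, hs⟩ := exists_eval_ne_zero (p := (X : F[X]) * (1 - X ^ 2) * (1 + X ^ 2) *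
      (1 + X ^ 3) * (X ^ 3 + C 2) * (1 + X ^ 3 + X ^ 6) * (1 + 2 * X ^ 3)) <| by
    refine mul_ne_zero (mul_ne_zero (mul_ne_zero (mul_ne_zero (mul_ne_zero (mul_ne_zero
      X_ne_zero (h₀ _ ?_)) (h₀ _ ?_)) (h₀ _ ?_)) (X_pow_add_C_ne_zero three_pos 2))
      (h₀ _ ?_)) (h₀ _ ?_) <;> simp
  simp only [eval_mul, eval_add, eval_sub, eval_pow, eval_X, eval_C, eval_one, eval_ofNat,
    mul_ne_zero_iff] at hs
  obtain ⟨⟨⟨⟨⟨⟨hs0, hs2⟩, hs2'⟩, hs3⟩, hs3'⟩, hs6⟩, hs3''⟩ := hs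
  refine ⟨s, s ^ 2, ?_, ?_, ?_, ?_, ?_, ?_⟩ <;> intro h
  · exact hs3 (by linear_combination h)
  · exact mul_ne_zero (pow_ne_zero 3 hs0) hs3' (by linear_combination h)
  · exact hs6 (by linear_combination h)
  · exact hs3'' (by linear_combination h)
  · exact mul_ne_zero (mul_ne_zero hs2 hs2) hs2' (by linear_combination h)
  · exact mul_ne_zero (pow_ne_zero 2 hs0) hs2 (by linear_combination h)

theorem stmt5_general {F : Type*} [Field F] [Infinite F] (n : ℕ) :
    ∃ b : Module.Basis (Fin (n ^ 2)) F (Matrix (Fin n) (Fin n) F),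
      (∀ i, b i * b i = b i) ∧
      (∀ i, (b i).rank = 1) ∧
      (∀ i, Matrix.trace (b i * b i) = 1) ∧
      (∀ i j, i ≠ j → Matrix.trace (b i * b j) ≠ 1) := by
  obtain ⟨s, t, hd, h₁, h₂, h₃, h₄, hst⟩ := exists_quasiAxis_params F
  have hself := quasiAxisVec_dotProduct_self_ne_zero (ι := Fin n) hd
  let e : Fin n × Fin n ≃ Fin (n ^ 2) := finProdFinEquiv.trans (finCongr (sq n).symm)
  refine ⟨(quasiAxisBasis (Fin n) hd hst).reindex e, fun i => ?_, fun i => ?_, fun i => ?_,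
    fun i j hij => ?_⟩ <;> simp only [Module.Basis.reindex_apply, coe_quasiAxisBasis]
  · exact rankOneIdempotent_mul_self (hself _)
  · exact rank_rankOneIdempotent (hself _)
  · rw [quasiAxis, rankOneIdempotent_mul_self (hself _), trace_rankOneIdempotent (hself _)]
  · exact trace_quasiAxis_mul_ne_one hd h₁ h₂ h₃ h₄ (e.symm.injective.ne hij)

/-- over an infinite field `F` (of characteristic not 2), the Jordan matrix
algebra `M_n^{(+)}(F)` has a quasi-definite basis of primitive axes, i.e. a linear basis of
rank-one idempotents `H_i` with `tr(H_i H_i) = 1` and `tr(H_i H_j) ≠ 1` for `i ≠ j`. -/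
theorem stmt5 {F : Type*} [Field F] [Infinite F] (h2 : (2 : F) ≠ 0) (n : ℕ) :
    ∃ b : Module.Basis (Fin (n ^ 2)) F (Matrix (Fin n) (Fin n) F),
      (∀ i, b i * b i = b i) ∧
      (∀ i, (b i).rank = 1) ∧
      (∀ i, Matrix.trace (b i * b i) = 1) ∧
      (∀ i j, i ≠ j → Matrix.trace (b i * b j) ≠ 1) :=
  stmt5_general n
end

section
/- Let A be a primitive axial algebra of Jordan type 1/2 over a field F of characteristic not 2, and let a, b be primitive axes in A with (a, b) ≠ 1. Set x_a(b) = (2ab − (a,b)·a − b)/((a,b) − 1). Then: (1) x_a(b) is an idempotent; (2) a + x_a(b) is a unit of the subalgebra of A generated by a and b; (3) (x_a(b), x_a(b)) = 1. -/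
/-! Decompose `b = b₀ + bₕ + (a,b) a` with `b₀ ∈ A₀(a)`, `bₕ ∈ A_{1/2}(a)`; then
`x_a(b) = b₀ / (1 - (a,b))`. The product `b bₕ` can be computed from this decomposition, and
also from `bₕ = 2ab - 2(a,b)a` together with `b(ab) = ½ab + ½(a,b)b`. By the fusion rules
`b₀ bₕ ∈ A_{1/2}(a)` and `bₕ² ∈ A₀(a) + A₁(a)`, so comparing the two results determines both
products, and then `b² = b` gives `b₀² = (1 - (a,b)) b₀`. Hence `span {a, b₀, bₕ}` is a
subalgebra containing `a` and `b`, and `a + x_a(b)` fixes each of `a, b₀, bₕ`. Finally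
`(b₀, b₀) = (b₀, b) = 1 - 2(a,b) + (a,b)²`. -/

namespace AxialPaper

open Submodule

variable {F : Type*} [Field F] {A : Type*} [NonUnitalNonAssocCommRing A] [Module F A]
  {a b b₀ bₕ : A} {p : F}

theorem apply_eq_zero_of_mul_eq_smul {Bf : A →ₗ[F] A →ₗ[F] F}
    (hinv : ∀ x y z : A, Bf (x * y) z = Bf x (y * z)) {e x y : A} {s t : F}
    (hx : e * x = s • x) (hy : e * y = t • y) (hst : s ≠ t) : Bf x y = 0 := by
  have h : s * Bf x y = t * Bf x y := by
    rw [← smul_eq_mul, ← LinearMap.smul_apply, ← map_smul, ← hx, mul_comm, hinv, hy,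
      map_smul, smul_eq_mul]
  by_contra hB
  exact hst (mul_right_cancel₀ hB h)

structure IsPeirceDecomp (a b b₀ bₕ : A) (p : F) : Prop where
  mul_zero : a * b₀ = 0
  mul_half : a * bₕ = (2⁻¹ : F) • bₕ
  eq_add : b = b₀ + bₕ + p • a

theorem IsPrimitiveAxis.exists_isPeirceDecomp {Bf : A →ₗ[F] A →ₗ[F] F}
    (hB : IsFrobeniusForm F Bf) (ha : IsPrimitiveAxis F a) (b : A) :
    ∃ b₀ bₕ : A, IsPeirceDecomp a b b₀ bₕ (Bf a b) := by
  obtain ⟨b₀, ⟨-, h₀⟩, bₕ, ⟨-, hₕ⟩, b₁, hb₁, rfl⟩ := ha.decomp b (Set.mem_univ b)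
  obtain ⟨c, rfl⟩ := ha.prim b₁ hb₁
  have ha₁ : a * a = (1 : F) • a := by rw [ha.idem, one_smul]
  have h1 : (1 : F) ≠ 2⁻¹ := by
    rw [ne_comm, Ne, inv_eq_one, ← one_add_one_eq_two, add_eq_right]
    exact one_ne_zero
  have hinv := hB.2.2.1
  have hB₀ : Bf a b₀ = 0 := apply_eq_zero_of_mul_eq_smul hinv ha₁ h₀ one_ne_zero
  have hBₕ : Bf a bₕ = 0 := apply_eq_zero_of_mul_eq_smul hinv ha₁ hₕ h1
  refine ⟨b₀, bₕ, by simpa using h₀, hₕ, ?_⟩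
  simp [hB₀, hBₕ, hB.2.2.2 a ha]

variable [SMulCommClass F A A]

/-- `ad_e (ad_e - 1)` kills `w₀ + w₁` but multiplies `u` by `-1/4`. -/
theorem eq_zero_of_add_eq_zero_of_half {e u w₀ w₁ : A} (h2 : (2 : F) ≠ 0)
    (hu : e * u = (2⁻¹ : F) • u) (hw₀ : e * w₀ = 0) (hw₁ : e * w₁ = w₁)
    (h : u + (w₀ + w₁) = 0) : u = 0 := by
  have h₁ : (2⁻¹ : F) • u + w₁ = 0 := by
    simpa [mul_add, hu, hw₀, hw₁] using congrArg (e * ·) h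
  have h₂ : (2⁻¹ * 2⁻¹ : F) • u + w₁ = 0 := by
    simpa [mul_add, mul_smul_comm, hu, hw₁, smul_smul] using congrArg (e * ·) h₁
  have hc : (2⁻¹ - 2⁻¹ * 2⁻¹ : F) ≠ 0 := by
    rw [show (2⁻¹ - 2⁻¹ * 2⁻¹ : F) = 2⁻¹ * 2⁻¹ by field_simp; ring]
    exact mul_ne_zero (inv_ne_zero h2) (inv_ne_zero h2)
  have : (2⁻¹ - 2⁻¹ * 2⁻¹ : F) • u = 0 := by
    rw [sub_smul, ← add_sub_add_right_eq_sub _ _ w₁, h₁, h₂, sub_zero]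
  exact (smul_eq_zero.mp this).resolve_left hc

namespace IsPeirceDecomp

theorem mul_eq (hd : IsPeirceDecomp a b b₀ bₕ p) (ha : a * a = a) :
    a * b = (2⁻¹ : F) • bₕ + p • a := by
  rw [hd.eq_add, mul_add, mul_add, hd.mul_zero, hd.mul_half, mul_smul_comm, ha, zero_add]

theorem mul_half_eq_add (hd : IsPeirceDecomp a b b₀ bₕ p) :
    b * bₕ = b₀ * bₕ + bₕ * bₕ + (2⁻¹ * p) • bₕ := by
  rw [hd.eq_add, add_mul, add_mul, mul_comm (p • a), mul_smul_comm, mul_comm bₕ a, hd.mul_half,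
    smul_smul, mul_comm p]

theorem zero_eq (hd : IsPeirceDecomp a b b₀ bₕ p) (h2 : (2 : F) ≠ 0) (ha : a * a = a) :
    b₀ = b - (2 : F) • (a * b) + p • a := by
  rw [hd.mul_eq ha, hd.eq_add]
  match_scalars <;> field_simp <;> ring

theorem mul_mul_eq (hd : IsPeirceDecomp a b b₀ bₕ p) (h2 : (2 : F) ≠ 0) (ha : a * a = a) :
    a * (a * b) = (2⁻¹ : F) • (a * b) + (2⁻¹ * p) • a := by
  rw [hd.mul_eq ha, mul_add, mul_smul_comm, mul_smul_comm, hd.mul_half, ha]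
  match_scalars <;> field_simp
  ring

theorem half_eq (hd : IsPeirceDecomp a b b₀ bₕ p) (h2 : (2 : F) ≠ 0) (ha : a * a = a) :
    bₕ = (2 : F) • (a * b) - (2 * p) • a := by
  rw [hd.mul_eq ha]
  match_scalars <;> field_simp
  ring

theorem mul_half_eq (hd : IsPeirceDecomp a b b₀ bₕ p) (h2 : (2 : F) ≠ 0) (ha : a * a = a)
    (hbab : b * (a * b) = (2⁻¹ : F) • (a * b) + (2⁻¹ * p) • b) :
    b * bₕ = p • b₀ + (2⁻¹ : F) • bₕ + (p - p * p) • a := by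
  calc b * bₕ = (2 : F) • (b * (a * b)) - (2 * p) • (a * b) := by
        conv_lhs => rw [hd.half_eq h2 ha]
        rw [mul_sub, mul_smul_comm, mul_smul_comm, mul_comm b a]
    _ = p • b₀ + (2⁻¹ : F) • bₕ + (p - p * p) • a := by
        rw [hbab, hd.mul_eq ha]
        conv_lhs => rw [hd.eq_add]
        match_scalars <;> field_simp <;> ring

theorem zero_mul_half (hd : IsPeirceDecomp a b b₀ bₕ p) (h2 : (2 : F) ≠ 0)
    (ha : IsPrimitiveAxis F a) (hbab : b * (a * b) = (2⁻¹ : F) • (a * b) + (2⁻¹ * p) • b) :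
    b₀ * bₕ = (2⁻¹ * (1 - p)) • bₕ := by
  have h₀ : b₀ ∈ evecIn F Set.univ a 0 := ⟨trivial, by rw [hd.mul_zero, zero_smul]⟩
  have hₕ : bₕ ∈ evecIn F Set.univ a 2⁻¹ := ⟨trivial, hd.mul_half⟩
  obtain ⟨z₀, ⟨-, hz₀⟩, z₁, ⟨-, hz₁⟩, hz⟩ := ha.fusionhh bₕ hₕ bₕ hₕ
  have hsum : (b₀ * bₕ - (2⁻¹ * (1 - p)) • bₕ) + ((z₀ - p • b₀) + (z₁ - (p - p * p) • a))
      = 0 := by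
    have h := (hd.mul_half_eq_add).symm.trans (hd.mul_half_eq h2 ha.idem hbab)
    rw [hz] at h
    linear_combination (norm := module) h
  refine sub_eq_zero.mp (eq_zero_of_add_eq_zero_of_half (e := a) h2 ?_ ?_ ?_ hsum)
  · rw [mul_sub, (ha.fusion0h b₀ h₀ bₕ hₕ).2, mul_smul_comm, hd.mul_half, smul_sub, smul_comm]
  · rw [mul_sub, hz₀, mul_smul_comm, hd.mul_zero, zero_smul, smul_zero, sub_zero]
  · rw [mul_sub, hz₁, mul_smul_comm, ha.idem, one_smul]

theorem half_mul_half (hd : IsPeirceDecomp a b b₀ bₕ p) (h2 : (2 : F) ≠ 0)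
    (ha : IsPrimitiveAxis F a) (hbab : b * (a * b) = (2⁻¹ : F) • (a * b) + (2⁻¹ * p) • b) :
    bₕ * bₕ = p • b₀ + (p - p * p) • a := by
  have h := (hd.mul_half_eq_add).symm.trans (hd.mul_half_eq h2 ha.idem hbab)
  rw [hd.zero_mul_half h2 ha hbab] at h
  linear_combination (norm := module) h

theorem xab_eq {Bf : A →ₗ[F] A →ₗ[F] F} (hd : IsPeirceDecomp a b b₀ bₕ (Bf a b))
    (h2 : (2 : F) ≠ 0) (ha : a * a = a) : xab F Bf a b = (1 - Bf a b)⁻¹ • b₀ := by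
  rw [hd.zero_eq h2 ha, xab, ← neg_sub, inv_neg]
  module

theorem apply_zero_zero {Bf : A →ₗ[F] A →ₗ[F] F} (hB : IsFrobeniusForm F Bf)
    (hd : IsPeirceDecomp a b b₀ bₕ (Bf a b)) (h2 : (2 : F) ≠ 0) (ha : IsPrimitiveAxis F a)
    (hb : IsPrimitiveAxis F b) : Bf b₀ b₀ = (1 - Bf a b) ^ 2 := by
  obtain ⟨-, hsymm, hinv, hax⟩ := hB
  have h₀ : a * b₀ = (0 : F) • b₀ := by rw [hd.mul_zero, zero_smul]
  have ha₁ : a * a = (1 : F) • a := by rw [ha.idem, one_smul]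
  have h₀ₕ : Bf b₀ bₕ = 0 :=
    apply_eq_zero_of_mul_eq_smul hinv h₀ hd.mul_half (inv_ne_zero h2).symm
  have h₀₁ : Bf b₀ a = 0 := apply_eq_zero_of_mul_eq_smul hinv h₀ ha₁ zero_ne_one
  calc Bf b₀ b₀ = Bf b₀ b := by
        conv_rhs => rw [hd.eq_add]
        simp only [map_add, map_smul, h₀ₕ, h₀₁, smul_zero, add_zero]
    _ = Bf b b - 2 * Bf b (a * b) + Bf a b * Bf b a := by
        rw [hsymm, hd.zero_eq h2 ha.idem]
        simp only [map_add, map_sub, map_smul, smul_eq_mul]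
    _ = (1 - Bf a b) ^ 2 := by
        rw [mul_comm a b, ← hinv, hb.idem, hsymm b a, hax b hb]
        ring

end IsPeirceDecomp

theorem IsPrimitiveAxis.mul_mul_eq {Bf : A →ₗ[F] A →ₗ[F] F} (h2 : (2 : F) ≠ 0)
    (hB : IsFrobeniusForm F Bf) (ha : IsPrimitiveAxis F a) (b : A) :
    a * (a * b) = (2⁻¹ : F) • (a * b) + (2⁻¹ * Bf a b) • a :=
  let ⟨_, _, hd⟩ := ha.exists_isPeirceDecomp hB b
  hd.mul_mul_eq h2 ha.idem

variable [IsScalarTower F A A]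

theorem mul_mem_span_of_forall_mul_mem {s : Set A}
    (hs : ∀ x ∈ s, ∀ y ∈ s, x * y ∈ span F s) {x y : A}
    (hx : x ∈ span F s) (hy : y ∈ span F s) : x * y ∈ span F s := by
  have hle : map₂ (LinearMap.mul F A) (span F s) (span F s) ≤ span F s := by
    rw [map₂_span_span, span_le]
    rintro _ ⟨x, hx, y, hy, rfl⟩
    exact hs x hx y hy
  exact map₂_le.mp hle x hx y hy

theorem mul_eq_self_of_mem_span {s : Set A} {u : A} (hs : ∀ x ∈ s, u * x = x) {z : A}
    (hz : z ∈ span F s) : u * z = z :=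
  LinearMap.eqOn_span' (f := LinearMap.mul F A u) (g := LinearMap.id) hs hz

theorem isIdempotentElem_inv_smul {y : A} {c : F} (hy : y * y = c • y) (hc : c ≠ 0) :
    IsIdempotentElem (c⁻¹ • y) := by
  rw [IsIdempotentElem, smul_mul_smul_comm, hy, smul_smul, inv_mul_cancel_right₀ hc]

theorem xab_mem_adjoin (Bf : A →ₗ[F] A →ₗ[F] F) (a b : A) :
    xab F Bf a b ∈ NonUnitalAlgebra.adjoin F {a, b} := by
  have ha : a ∈ NonUnitalAlgebra.adjoin F {a, b} := NonUnitalAlgebra.subset_adjoin F (by simp)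
  have hb : b ∈ NonUnitalAlgebra.adjoin F {a, b} := NonUnitalAlgebra.subset_adjoin F (by simp)
  exact SMulMemClass.smul_mem _
    (sub_mem (sub_mem (SMulMemClass.smul_mem _ (mul_mem ha hb)) (SMulMemClass.smul_mem _ ha)) hb)

namespace IsPeirceDecomp

theorem zero_mul_zero (hd : IsPeirceDecomp a b b₀ bₕ p) (h2 : (2 : F) ≠ 0)
    (ha : IsPrimitiveAxis F a) (hb : b * b = b)
    (hbab : b * (a * b) = (2⁻¹ : F) • (a * b) + (2⁻¹ * p) • b) :
    b₀ * b₀ = (1 - p) • b₀ := by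
  have h := hb
  rw [hd.eq_add] at h
  simp only [add_mul, mul_add, smul_mul_assoc, mul_smul_comm, mul_comm bₕ b₀, mul_comm b₀ a,
    mul_comm bₕ a, ha.idem, hd.mul_zero, hd.mul_half, hd.zero_mul_half h2 ha hbab,
    hd.half_mul_half h2 ha hbab, smul_zero, zero_add, add_zero] at h
  linear_combination (norm := match_scalars <;> field_simp <;> ring) h

theorem adjoin_subset_span (hd : IsPeirceDecomp a b b₀ bₕ p) (h2 : (2 : F) ≠ 0)
    (ha : IsPrimitiveAxis F a) (hb : b * b = b)
    (hbab : b * (a * b) = (2⁻¹ : F) • (a * b) + (2⁻¹ * p) • b) :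
    (NonUnitalAlgebra.adjoin F {a, b} : Set A) ⊆ span F {a, b₀, bₕ} := by
  have hma : a ∈ span F {a, b₀, bₕ} := subset_span (by simp)
  have hm₀ : b₀ ∈ span F {a, b₀, bₕ} := subset_span (by simp)
  have hmₕ : bₕ ∈ span F {a, b₀, bₕ} := subset_span (by simp)
  have hmul : ∀ x ∈ ({a, b₀, bₕ} : Set A), ∀ y ∈ ({a, b₀, bₕ} : Set A),
      x * y ∈ span F {a, b₀, bₕ} := by
    rintro x (hx | hx | hx) y (hy | hy | hy) <;> subst x y <;>
    simp only [mul_comm b₀ a, mul_comm bₕ a, mul_comm bₕ b₀, ha.idem,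
      hd.mul_zero, hd.mul_half, hd.zero_mul_zero h2 ha hb hbab, hd.zero_mul_half h2 ha hbab,
      hd.half_mul_half h2 ha hbab] <;>
    first
      | exact hma | exact zero_mem _ | exact smul_mem _ _ hm₀ | exact smul_mem _ _ hmₕ
      | exact add_mem (smul_mem _ _ hm₀) (smul_mem _ _ hma)
  let S := (span F {a, b₀, bₕ}).toNonUnitalSubalgebra
    (fun _ _ hx hy => mul_mem_span_of_forall_mul_mem hmul hx hy)
  refine NonUnitalAlgebra.adjoin_le (S := S) ?_
  rintro x (rfl | rfl)
  · exact hma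
  · rw [hd.eq_add]
    exact add_mem (add_mem hm₀ hmₕ) (smul_mem _ _ hma)

theorem add_inv_smul_mul_eq_self (hd : IsPeirceDecomp a b b₀ bₕ p) (h2 : (2 : F) ≠ 0)
    (ha : IsPrimitiveAxis F a) (hb : b * b = b)
    (hbab : b * (a * b) = (2⁻¹ : F) • (a * b) + (2⁻¹ * p) • b) (hp : 1 - p ≠ 0) {z : A}
    (hz : z ∈ span F {a, b₀, bₕ}) : (a + (1 - p)⁻¹ • b₀) * z = z := by
  refine mul_eq_self_of_mem_span ?_ hz
  rintro x (hx | hx | hx) <;> subst x <;>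
    simp only [add_mul, smul_mul_assoc, mul_comm b₀ a, ha.idem, hd.mul_zero, hd.mul_half,
      hd.zero_mul_zero h2 ha hb hbab, hd.zero_mul_half h2 ha hbab, smul_zero, add_zero,
      zero_add, smul_smul, inv_mul_cancel₀ hp, one_smul]
  match_scalars
  field_simp
  ring

end IsPeirceDecomp

end AxialPaper

open AxialPaper in
theorem stmt6_general {F : Type*} [Field F] {A : Type*} [NonUnitalNonAssocCommRing A]
    [Module F A] [SMulCommClass F A A] [IsScalarTower F A A]
    (h2 : (2 : F) ≠ 0)
    (Bf : A →ₗ[F] A →ₗ[F] F) (hB : IsFrobeniusForm F Bf)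
    (a b : A) (ha : IsPrimitiveAxis F a) (hb : IsPrimitiveAxis F b)
    (hab : Bf a b ≠ 1) :
    xab F Bf a b * xab F Bf a b = xab F Bf a b ∧
    a + xab F Bf a b ∈ NonUnitalAlgebra.adjoin F ({a, b} : Set A) ∧
    (∀ z ∈ NonUnitalAlgebra.adjoin F ({a, b} : Set A), (a + xab F Bf a b) * z = z) ∧
    Bf (xab F Bf a b) (xab F Bf a b) = 1 := by
  obtain ⟨b₀, bₕ, hd⟩ := ha.exists_isPeirceDecomp hB b
  have hbab : b * (a * b) = (2⁻¹ : F) • (a * b) + (2⁻¹ * Bf a b) • b := by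
    simpa only [mul_comm b a, hB.2.1 b a] using IsPrimitiveAxis.mul_mul_eq h2 hB hb a
  have hp : 1 - Bf a b ≠ 0 := sub_ne_zero.mpr hab.symm
  have hx := hd.xab_eq h2 ha.idem
  refine ⟨?_, add_mem (NonUnitalAlgebra.subset_adjoin F (by simp)) (xab_mem_adjoin Bf a b),
    fun z hz => ?_, ?_⟩ <;> rw [hx]
  · exact isIdempotentElem_inv_smul (hd.zero_mul_zero h2 ha hb.idem hbab) hp
  · exact hd.add_inv_smul_mul_eq_self h2 ha hb.idem hbab hp
      (hd.adjoin_subset_span h2 ha hb.idem hbab hz)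
  · simp only [map_smul, LinearMap.smul_apply, smul_eq_mul, hd.apply_zero_zero hB h2 ha hb]
    field_simp

open AxialPaper in
/-- Lemma `id`: `x_a(b)` is an idempotent of norm 1, and `a + x_a(b)` is a
unit of the subalgebra generated by `a` and `b`. -/
theorem stmt6 {F : Type*} [Field F] {A : Type*} [NonUnitalNonAssocCommRing A]
    [Module F A] [SMulCommClass F A A] [IsScalarTower F A A]
    (h2 : (2 : F) ≠ 0)
    (hA : IsAxialJordanHalf F A)
    (Bf : A →ₗ[F] A →ₗ[F] F) (hB : IsFrobeniusForm F Bf)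
    (a b : A) (ha : IsPrimitiveAxis F a) (hb : IsPrimitiveAxis F b)
    (hab : Bf a b ≠ 1) :
    xab F Bf a b * xab F Bf a b = xab F Bf a b ∧
    a + xab F Bf a b ∈ NonUnitalAlgebra.adjoin F ({a, b} : Set A) ∧
    (∀ z ∈ NonUnitalAlgebra.adjoin F ({a, b} : Set A), (a + xab F Bf a b) * z = z) ∧
    Bf (xab F Bf a b) (xab F Bf a b) = 1 :=
  stmt6_general h2 Bf hB a b ha hb hab
end

section
/- Let A be a primitive axial algebra of Jordan type 1/2 over a field F of characteristic not 2, and suppose A has a quasi-definite linear basis B consisting of primitive axes. Fix a ∈ B and set B_0 = {x_a(y) : y ∈ B \ {a}} (each x_a(y) is defined since (a,y) ≠ 1). Then the linear span of B_0 equals A_0(a). -/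
/-! The map `b ↦ b - 2ab + (a,b)a` is the projection of `A` onto `A_0(a)`: this is the identity
`2a(ab) = ab + (a,b)a`, read off the eigenspace decomposition of `b`. The projection kills `a` and
sends every other basis axis `b` to `(1 - (a,b)) x_a(b)`, so its image `A_0(a)` is spanned by
`B_0`. -/

namespace AxialPaper

variable {F : Type*} [Field F] {A : Type*} [NonUnitalNonAssocCommRing A] [Module F A]
  {Bf : A →ₗ[F] A →ₗ[F] F} {a : A}

theorem form_eq_zero_of_mul_eq_smul (hinv : ∀ x y z : A, Bf (x * y) z = Bf x (y * z))
    (haa : a * a = a) {x : A} {lam : F} (hx : a * x = lam • x) (hlam : lam ≠ 1) :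
    Bf a x = 0 := by
  have h : Bf a x = lam * Bf a x := by
    rw [← smul_eq_mul, ← map_smul, ← hx, ← hinv, haa]
  have h' : (lam - 1) * Bf a x = 0 := by linear_combination -h
  exact (mul_eq_zero.mp h').resolve_left (sub_ne_zero.mpr hlam)

variable [SMulCommClass F A A]

/-- Writing `b = b₀ + b_½ + c a` in the eigenspaces of `a`, both sides equal `b_½ / 2 + 2 c a`. -/
theorem IsPrimitiveAxis.two_smul_mul_mul (h2 : (2 : F) ≠ 0) (ha : IsPrimitiveAxis F a)
    (hinv : ∀ x y z : A, Bf (x * y) z = Bf x (y * z)) (hBaa : Bf a a = 1) (b : A) :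
    (2 : F) • (a * (a * b)) = a * b + Bf a b • a := by
  obtain ⟨b0, ⟨-, hb0⟩, bh, ⟨-, hbh⟩, b1, hb1, rfl⟩ := ha.decomp b trivial
  obtain ⟨c, rfl⟩ := ha.prim b1 hb1
  rw [zero_smul] at hb0
  have hBb0 : Bf a b0 = 0 :=
    form_eq_zero_of_mul_eq_smul hinv ha.idem (hb0.trans (zero_smul F b0).symm) zero_ne_one
  have hBbh : Bf a bh = 0 :=
    form_eq_zero_of_mul_eq_smul hinv ha.idem hbh
      (inv_ne_one.mpr fun h => one_ne_zero (by linear_combination h))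
  have hab : a * (b0 + bh + c • a) = (2⁻¹ : F) • bh + c • a := by
    rw [mul_add, mul_add, hb0, hbh, mul_smul_comm, ha.idem, zero_add]
  rw [hab, mul_add, mul_smul_comm, mul_smul_comm, hbh, ha.idem, map_add, map_add, hBb0, hBbh,
    map_smul, smul_eq_mul, hBaa]
  match_scalars
  · field_simp
  · ring

variable (Bf a) in
def zeroProj : A →ₗ[F] A :=
  LinearMap.id - (2 : F) • LinearMap.mulLeft F a + (Bf a).smulRight a

theorem zeroProj_apply (b : A) : zeroProj Bf a b = b - (2 : F) • (a * b) + Bf a b • a := rfl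

theorem xab_eq_smul_zeroProj (b : A) : xab F Bf a b = (1 - Bf a b)⁻¹ • zeroProj Bf a b := by
  rw [xab, zeroProj_apply, ← neg_sub (Bf a b), ← neg_inv, neg_smul, ← smul_neg]
  congr 1
  abel

theorem zeroProj_eq_smul_xab {b : A} (hb : Bf a b ≠ 1) :
    zeroProj Bf a b = (1 - Bf a b) • xab F Bf a b := by
  rw [xab_eq_smul_zeroProj, smul_smul, mul_inv_cancel₀ (sub_ne_zero.mpr hb.symm), one_smul]

theorem zeroProj_self (haa : a * a = a) (hBaa : Bf a a = 1) : zeroProj Bf a a = 0 := by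
  rw [zeroProj_apply, haa, hBaa]
  module

theorem zeroProj_of_mem_evecSub_zero (hinv : ∀ x y z : A, Bf (x * y) z = Bf x (y * z))
    (haa : a * a = a) {x : A} (hx : x ∈ evecSub F a 0) : zeroProj Bf a x = x := by
  have hx0 : a * x = (0 : F) • x := hx
  rw [zeroProj_apply, form_eq_zero_of_mul_eq_smul hinv haa hx0 (zero_ne_one (α := F)), hx0]
  simp

theorem range_zeroProj (h2 : (2 : F) ≠ 0) (ha : IsPrimitiveAxis F a)
    (hinv : ∀ x y z : A, Bf (x * y) z = Bf x (y * z)) (hBaa : Bf a a = 1) :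
    LinearMap.range (zeroProj Bf a) = evecSub F a 0 := by
  apply le_antisymm
  · rintro _ ⟨b, rfl⟩
    show a * zeroProj Bf a b = (0 : F) • zeroProj Bf a b
    rw [zeroProj_apply, mul_add, mul_sub, mul_smul_comm, mul_smul_comm, ha.idem,
      ha.two_smul_mul_mul h2 hinv hBaa]
    module
  · exact fun x hx => ⟨x, zeroProj_of_mem_evecSub_zero hinv ha.idem hx⟩

end AxialPaper

open AxialPaper in
theorem stmt9_general {F : Type*} [Field F] {A : Type*} [NonUnitalNonAssocCommRing A]
    [Module F A] [SMulCommClass F A A] [IsScalarTower F A A]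
    (h2 : (2 : F) ≠ 0)
    (Bf : A →ₗ[F] A →ₗ[F] F) (hB : IsFrobeniusForm F Bf)
    (ι : Type*) (bb : Module.Basis ι F A)
    (hax : ∀ i, IsPrimitiveAxis F (bb i))
    (hqd : ∀ i j, i ≠ j → Bf (bb i) (bb j) ≠ 1)
    (i0 : ι) :
    Submodule.span F {x : A | ∃ j : ι, j ≠ i0 ∧ x = xab F Bf (bb i0) (bb j)}
      = evecSub F (bb i0) 0 := by
  obtain ⟨-, -, hinv, hnorm⟩ := hB
  have ha := hax i0
  rw [← range_zeroProj h2 ha hinv (hnorm _ ha)]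
  apply le_antisymm
  · rw [Submodule.span_le]
    rintro _ ⟨j, -, rfl⟩
    rw [xab_eq_smul_zeroProj]
    exact Submodule.smul_mem _ _ (LinearMap.mem_range_self _ _)
  · rw [LinearMap.range_eq_map, ← bb.span_eq, Submodule.map_span_le]
    rintro _ ⟨j, rfl⟩
    by_cases hj : j = i0
    · rw [hj, zeroProj_self ha.idem (hnorm _ ha)]
      exact Submodule.zero_mem _
    · rw [zeroProj_eq_smul_xab (hqd i0 j (Ne.symm hj))]
      exact Submodule.smul_mem _ _ (Submodule.subset_span ⟨j, hj, rfl⟩)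

open AxialPaper in
/-- Lemma `bazis`: if `A` has a quasi-definite basis `B` of primitive axes
and `a ∈ B`, then the span of `B_0 = {x_a(y) : y ∈ B, y ≠ a}` equals `A_0(a)`. -/
theorem stmt9 {F : Type*} [Field F] {A : Type*} [NonUnitalNonAssocCommRing A]
    [Module F A] [SMulCommClass F A A] [IsScalarTower F A A]
    (h2 : (2 : F) ≠ 0)
    (hA : IsAxialJordanHalf F A)
    (Bf : A →ₗ[F] A →ₗ[F] F) (hB : IsFrobeniusForm F Bf)
    (ι : Type*) (bb : Module.Basis ι F A)
    (hax : ∀ i, IsPrimitiveAxis F (bb i))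
    (hqd : ∀ i j, i ≠ j → Bf (bb i) (bb j) ≠ 1)
    (i0 : ι) :
    Submodule.span F {x : A | ∃ j : ι, j ≠ i0 ∧ x = xab F Bf (bb i0) (bb j)}
      = evecSub F (bb i0) 0 :=
  stmt9_general h2 Bf hB ι bb hax hqd i0
end

section
/- Let A be a semisimple primitive axial algebra of Jordan type 1/2 over a field F of characteristic not 2, and suppose A has a quasi-definite linear basis X consisting of primitive axes. If for each x_i ∈ X the subalgebra A_0(x_i) contains a unit e_0(x_i), then for any x_1 ∈ X the element e = e_0(x_1) + x_1 is a unit of A. -/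
/-! If `a, b ∈ X` are distinct, then `φ = (a, b) ≠ 1`; write `b = b₀ + b_{1/2} + φ a` along the
eigenspaces of `a`. Computing `b b_{1/2}` a second time through the decomposition of `a` along
the eigenspaces of `b`, and comparing `A_0(a)`-components there and in `b² = b`, gives
`b₀² = (1 - φ) b₀`. Since moreover `(b₀, b₀) = (1 - φ)²`, invariance of the form yields
`(1 - φ) (e₀(a), b₀) = (e₀(a) b₀, b₀) = (1 - φ)²`, so `(e₀(a) + a, b) = (e₀(a), b₀) + φ = 1`.
Thus `(e₀(x_i) + x_i, x_j) = 1` for all `i, j`, and by nondegeneracy `e = e₀(x_i) + x_i` does not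
depend on `i`. Hence `e x_j = (e₀(x_j) + x_j) x_j = x_j` for every `j`, and `e` is a unit. -/

namespace AxialPaper

variable {F : Type*} [Field F] {A : Type*} [NonUnitalNonAssocCommRing A] [Module F A]

lemma one_ne_inv_two : (1 : F) ≠ 2⁻¹ := by
  intro h
  have h2 : (2 : F) = 1 := inv_eq_one.mp h.symm
  exact one_ne_zero (by linear_combination h2 : (1 : F) = 0)

@[simp]
lemma mem_evecIn_univ {e x : A} {lam : F} : x ∈ evecIn F Set.univ e lam ↔ e * x = lam • x := by
  simp [evecIn]

lemma form_eq_zero_of_eigen_ne {Bf : A →ₗ[F] A →ₗ[F] F}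
    (hinv : ∀ x y z : A, Bf (x * y) z = Bf x (y * z)) {a x y : A} {lam mu : F} (hne : lam ≠ mu)
    (hx : a * x = lam • x) (hy : a * y = mu • y) : Bf x y = 0 := by
  have h : lam * Bf x y = mu * Bf x y := by
    calc lam * Bf x y = Bf (a * x) y := by simp [hx]
      _ = Bf x (a * y) := by rw [mul_comm, hinv]
      _ = mu * Bf x y := by simp [hy]
  have h' : (lam - mu) * Bf x y = 0 := by rw [sub_mul, h, sub_self]
  exact (mul_eq_zero.mp h').resolve_left (sub_ne_zero.mpr hne)

lemma IsPrimitiveAxis.exists_decomp {Bf : A →ₗ[F] A →ₗ[F] F}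
    (hinv : ∀ x y z : A, Bf (x * y) z = Bf x (y * z)) {a : A} (ha : IsPrimitiveAxis F a)
    (haa : Bf a a = 1) (b : A) :
    ∃ b0 bh : A, a * b0 = 0 ∧ a * bh = (2⁻¹ : F) • bh ∧ b = b0 + bh + Bf a b • a := by
  obtain ⟨b0, hb0, bh, hbh, b1, hb1, rfl⟩ := ha.decomp b (Set.mem_univ b)
  obtain ⟨c, rfl⟩ := ha.prim b1 hb1
  rw [mem_evecIn_univ, zero_smul] at hb0
  rw [mem_evecIn_univ] at hbh
  have ha1 : a * a = (1 : F) • a := by rw [one_smul, ha.idem]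
  have hab0 : Bf a b0 = 0 := form_eq_zero_of_eigen_ne hinv one_ne_zero ha1 (by rwa [zero_smul])
  have habh : Bf a bh = 0 := form_eq_zero_of_eigen_ne hinv one_ne_inv_two ha1 hbh
  exact ⟨b0, bh, hb0, hbh, by simp [hab0, habh, haa]⟩

variable [SMulCommClass F A A]

lemma eigen_components_eq_zero (h2 : (2 : F) ≠ 0) {a u0 uh u1 : A} (h0 : a * u0 = 0)
    (hh : a * uh = (2⁻¹ : F) • uh) (h1 : a * u1 = u1) (h : u0 + uh + u1 = 0) :
    u0 = 0 ∧ uh = 0 ∧ u1 = 0 := by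
  have ha : (2⁻¹ : F) • uh + u1 = 0 := by
    simpa [mul_add, h0, hh, h1] using congrArg (a * ·) h
  have haa : (2⁻¹ : F) • (2⁻¹ : F) • uh + u1 = 0 := by
    simpa [mul_add, mul_smul_comm, hh, h1] using congrArg (a * ·) ha
  have huh : uh = 0 := by
    have h4 : ((2⁻¹ : F) - 2⁻¹ * 2⁻¹) • uh = 0 := by
      linear_combination (norm := module) ha - haa
    refine (smul_eq_zero.mp h4).resolve_left ?_
    field_simp
    norm_num
  have hu1 : u1 = 0 := by simpa [huh] using ha
  exact ⟨by simpa [huh, hu1] using h, huh, hu1⟩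

lemma eq_of_eigen_components_eq (h2 : (2 : F) ≠ 0) {a x0 xh x1 y0 yh y1 : A}
    (hx0 : a * x0 = 0) (hxh : a * xh = (2⁻¹ : F) • xh) (hx1 : a * x1 = x1)
    (hy0 : a * y0 = 0) (hyh : a * yh = (2⁻¹ : F) • yh) (hy1 : a * y1 = y1)
    (h : x0 + xh + x1 = y0 + yh + y1) : x0 = y0 ∧ xh = yh ∧ x1 = y1 := by
  have := eigen_components_eq_zero h2 (u0 := x0 - y0) (uh := xh - yh) (u1 := x1 - y1)
    (by rw [mul_sub, hx0, hy0, sub_zero]) (by rw [mul_sub, hxh, hyh, smul_sub])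
    (by rw [mul_sub, hx1, hy1]) (by rw [← sub_eq_zero.mpr h]; abel)
  simpa only [sub_eq_zero] using this

lemma mul_eq_of_decomp {a b b0 bh : A} {c : F} (haa : a * a = a) (hb0 : a * b0 = 0)
    (hbh : a * bh = (2⁻¹ : F) • bh) (hdec : b = b0 + bh + c • a) :
    a * b = (2⁻¹ : F) • bh + c • a := by
  rw [hdec, mul_add, mul_add, hb0, hbh, mul_smul_comm, haa, zero_add]

lemma IsPrimitiveAxis.form_zeroPart_self (h2 : (2 : F) ≠ 0) {Bf : A →ₗ[F] A →ₗ[F] F}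
    (hB : IsFrobeniusForm F Bf) {a b b0 bh : A} (ha : IsPrimitiveAxis F a)
    (hb : IsPrimitiveAxis F b) (hb0 : a * b0 = 0) (hbh : a * bh = (2⁻¹ : F) • bh)
    (hdec : b = b0 + bh + Bf a b • a) :
    Bf b0 b0 = (1 - Bf a b) * (1 - Bf a b) := by
  obtain ⟨-, -, hinv, hnorm⟩ := hB
  have hab := mul_eq_of_decomp ha.idem hb0 hbh hdec
  set φ := Bf a b with hφ
  have hb0bh : Bf b0 bh = 0 :=
    form_eq_zero_of_eigen_ne hinv (inv_ne_zero h2).symm (by rw [hb0, zero_smul]) hbh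
  have hb0a : Bf b0 a = 0 :=
    form_eq_zero_of_eigen_ne hinv zero_ne_one (by rw [hb0, zero_smul]) (by rw [one_smul, ha.idem])
  have hbhb : Bf bh b = 2 * φ - 2 * (φ * φ) := by
    have h := hinv a b b
    rw [hab, hb.idem] at h
    simp only [map_add, map_smul, LinearMap.add_apply, LinearMap.smul_apply, smul_eq_mul,
      ← hφ] at h
    linear_combination (norm := (field_simp; ring)) 2 * h
  have hbb : Bf b0 b + Bf bh b + φ * φ = 1 := by
    have h := hnorm b hb
    nth_rewrite 1 [hdec] at h
    simpa [← hφ] using h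
  calc Bf b0 b0 = Bf b0 b := by
        conv_rhs => rw [hdec]
        simp [hb0bh, hb0a]
    _ = (1 - φ) * (1 - φ) := by linear_combination hbb - hbhb

lemma IsPrimitiveAxis.mul_halfPart (h2 : (2 : F) ≠ 0) {Bf : A →ₗ[F] A →ₗ[F] F}
    (hB : IsFrobeniusForm F Bf) {a b b0 bh : A} (ha : IsPrimitiveAxis F a)
    (hb : IsPrimitiveAxis F b) (hb0 : a * b0 = 0) (hbh : a * bh = (2⁻¹ : F) • bh)
    (hdec : b = b0 + bh + Bf a b • a) :
    b * bh = Bf a b • b0 + (2⁻¹ : F) • bh + (Bf a b - Bf a b * Bf a b) • a := by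
  obtain ⟨-, hsymm, hinv, hnorm⟩ := hB
  obtain ⟨a0, ah, ha0, hah, hdec'⟩ := hb.exists_decomp hinv (hnorm b hb) a
  rw [hsymm] at hdec'
  set φ := Bf a b
  have hab := mul_eq_of_decomp ha.idem hb0 hbh hdec
  have hba := mul_eq_of_decomp hb.idem ha0 hah hdec'
  -- `a b = b a` relates the `1/2`-parts of `b` along `a` and of `a` along `b`.
  have hbh' : bh = ah - ((2 : F) * φ) • a + ((2 : F) * φ) • b := by
    linear_combination (norm := (match_scalars <;> field_simp <;> ring))
      (2 : F) • hba - (2 : F) • hab + (2 : F) • mul_comm a b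
  calc b * bh = b * ah - ((2 : F) * φ) • (b * a) + ((2 : F) * φ) • (b * b) := by
        rw [hbh']; simp only [mul_add, mul_sub, mul_smul_comm]
    _ = φ • b0 + (2⁻¹ : F) • bh + (φ - φ * φ) • a := by
        rw [hah, hba, hb.idem]
        linear_combination (norm := (match_scalars <;> field_simp <;> ring))
          (φ - (2 : F)⁻¹) • hbh' + φ • hdec

variable [IsScalarTower F A A]

lemma IsPrimitiveAxis.zeroPart_mul_self (h2 : (2 : F) ≠ 0) {Bf : A →ₗ[F] A →ₗ[F] F}
    (hB : IsFrobeniusForm F Bf) {a b b0 bh : A} (ha : IsPrimitiveAxis F a)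
    (hb : IsPrimitiveAxis F b) (hb0 : a * b0 = 0) (hbh : a * bh = (2⁻¹ : F) • bh)
    (hdec : b = b0 + bh + Bf a b • a) :
    b0 * b0 = (1 - Bf a b) • b0 := by
  have hbbh := ha.mul_halfPart h2 hB hb hb0 hbh hdec
  set φ := Bf a b
  have hb0' : b0 ∈ evecIn F Set.univ a 0 := by simpa using hb0
  have hbh' : bh ∈ evecIn F Set.univ a 2⁻¹ := by simpa using hbh
  obtain ⟨z0, hz0, z1, hz1, hsq⟩ := ha.fusionhh bh hbh' bh hbh'
  obtain ⟨c, rfl⟩ := ha.prim z1 hz1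
  rw [mem_evecIn_univ, zero_smul] at hz0
  have hmix : a * (b0 * bh) = (2⁻¹ : F) • (b0 * bh) := (ha.fusion0h b0 hb0' bh hbh').2
  have hsq0 : a * (b0 * b0) = 0 := by simpa using (ha.fusion00 b0 hb0' b0 hb0').2
  have hc : a * (c • a) = c • a := by rw [mul_smul_comm, ha.idem]
  have hφa : a * (φ • a) = φ • a := by rw [mul_smul_comm, ha.idem]
  -- `A_0(a)`-components of `b * bh`, expanded along `b = b0 + bh + φ a`
  have hz0φ : z0 = φ • b0 := by
    refine (eq_of_eigen_components_eq h2 hz0 (xh := b0 * bh + (φ * 2⁻¹) • bh) ?_ hc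
      (y0 := φ • b0) (by rw [mul_smul_comm, hb0, smul_zero])
      (yh := (2⁻¹ : F) • bh) (by rw [mul_smul_comm, hbh])
      (y1 := (φ - φ * φ) • a) (by rw [mul_smul_comm, ha.idem]) ?_).1
    · rw [mul_add, hmix, mul_smul_comm, hbh, smul_add, smul_comm]
    · rw [← hbbh, hdec, add_mul, add_mul, hsq, smul_mul_assoc, hbh]
      module
  -- `A_0(a)`-components of `b * b = b`
  have hsum : b0 * b0 + z0 = b0 := by
    refine (eq_of_eigen_components_eq h2 (by rw [mul_add, hsq0, hz0, add_zero])
      (xh := (2 : F) • (b0 * bh) + φ • bh) (x1 := (c + φ * φ) • a) ?_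
      (by rw [mul_smul_comm, ha.idem]) hb0 hbh hφa ?_).1
    · rw [mul_add, mul_smul_comm, hmix, mul_smul_comm, hbh, smul_add, smul_comm, smul_comm φ]
    · calc _ = (b0 + bh + φ • a) * (b0 + bh + φ • a) := by
            simp only [add_mul, mul_add, smul_mul_assoc, mul_smul_comm, hsq, mul_comm bh b0,
              mul_comm b0 a, mul_comm bh a, hb0, hbh, ha.idem]
            match_scalars <;> field_simp <;> ring
        _ = b0 + bh + φ • a := by rw [← hdec, hb.idem]
  rw [eq_sub_of_add_eq hsum, hz0φ]
  module

lemma IsPrimitiveAxis.form_zeroUnit_eq_one_sub (h2 : (2 : F) ≠ 0) {Bf : A →ₗ[F] A →ₗ[F] F}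
    (hB : IsFrobeniusForm F Bf) {a b e0 : A} (ha : IsPrimitiveAxis F a)
    (hb : IsPrimitiveAxis F b) (hab : Bf a b ≠ 1) (he0mem : e0 ∈ evecIn F Set.univ a 0)
    (he0 : ∀ z ∈ evecIn F Set.univ a 0, e0 * z = z) :
    Bf e0 b = 1 - Bf a b := by
  have ⟨_, _, hinv, hnorm⟩ := hB
  obtain ⟨b0, bh, hb0, hbh, hdec⟩ := ha.exists_decomp hinv (hnorm a ha) b
  have hb0sq := ha.zeroPart_mul_self h2 hB hb hb0 hbh hdec
  have hb0b0 := ha.form_zeroPart_self h2 hB hb hb0 hbh hdec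
  rw [mem_evecIn_univ, zero_smul] at he0mem
  set φ := Bf a b
  have he0b0 : e0 * b0 = b0 := he0 b0 (by simpa using hb0)
  have he0bh : Bf e0 bh = 0 :=
    form_eq_zero_of_eigen_ne hinv (inv_ne_zero h2).symm (by rw [he0mem, zero_smul]) hbh
  have he0a : Bf e0 a = 0 :=
    form_eq_zero_of_eigen_ne hinv zero_ne_one (by rw [he0mem, zero_smul])
      (by rw [one_smul, ha.idem])
  have hcancel : (1 - φ) * Bf e0 b0 = (1 - φ) * (1 - φ) := by
    calc (1 - φ) * Bf e0 b0 = Bf e0 (b0 * b0) := by simp [hb0sq]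
      _ = Bf b0 b0 := by rw [← hinv, he0b0]
      _ = (1 - φ) * (1 - φ) := hb0b0
  calc Bf e0 b = Bf e0 b0 := by
        rw [hdec]
        simp [he0bh, he0a]
    _ = 1 - φ := mul_left_cancel₀ (sub_ne_zero.mpr (Ne.symm hab)) hcancel

lemma IsPrimitiveAxis.form_zeroUnit_add_eq_one (h2 : (2 : F) ≠ 0) {Bf : A →ₗ[F] A →ₗ[F] F}
    (hB : IsFrobeniusForm F Bf) {a b e0 : A} (ha : IsPrimitiveAxis F a)
    (hb : IsPrimitiveAxis F b) (hab : b = a ∨ Bf a b ≠ 1) (he0mem : e0 ∈ evecIn F Set.univ a 0)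
    (he0 : ∀ z ∈ evecIn F Set.univ a 0, e0 * z = z) :
    Bf (e0 + a) b = 1 := by
  have ⟨_, _, hinv, hnorm⟩ := hB
  rw [map_add, LinearMap.add_apply]
  rcases hab with rfl | hab
  · rw [mem_evecIn_univ, zero_smul] at he0mem
    rw [form_eq_zero_of_eigen_ne hinv zero_ne_one (by rw [he0mem, zero_smul])
      (by rw [one_smul, hb.idem]), hnorm b hb, zero_add]
  · rw [ha.form_zeroUnit_eq_one_sub h2 hB hb hab he0mem he0, sub_add_cancel]

end AxialPaper

namespace Module.Basis

variable {F : Type*} [Field F] {A : Type*} {ι : Type*}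

lemma eq_of_form_apply_eq [AddCommGroup A] [Module F A] {Bf : A →ₗ[F] A →ₗ[F] F}
    (hss : ∀ x : A, (∀ v : A, Bf x v = 0) → x = 0) (bb : Module.Basis ι F A) {x y : A}
    (h : ∀ k, Bf x (bb k) = Bf y (bb k)) : x = y := by
  have hxy : Bf x = Bf y := bb.ext h
  exact sub_eq_zero.mp (hss _ fun v => by rw [map_sub, LinearMap.sub_apply, hxy, sub_self])

lemma mul_eq_self [NonUnitalNonAssocRing A] [Module F A] [SMulCommClass F A A]
    [IsScalarTower F A A] (bb : Module.Basis ι F A) {e : A} (h : ∀ j, e * bb j = bb j) (x : A) :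
    e * x = x :=
  LinearMap.congr_fun (bb.ext (f₁ := LinearMap.mulLeft F e) (f₂ := LinearMap.id) h) x

end Module.Basis

open AxialPaper in
theorem stmt17_general {F : Type*} [Field F] {A : Type*} [NonUnitalNonAssocCommRing A]
    [Module F A] [SMulCommClass F A A] [IsScalarTower F A A]
    (h2 : (2 : F) ≠ 0)
    (Bf : A →ₗ[F] A →ₗ[F] F) (hB : IsFrobeniusForm F Bf)
    (hss : ∀ x : A, (∀ v : A, Bf x v = 0) → x = 0)
    (ι : Type*) (bb : Module.Basis ι F A)
    (hax : ∀ i, IsPrimitiveAxis F (bb i))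
    (hqd : ∀ i j, i ≠ j → Bf (bb i) (bb j) ≠ 1)
    (e0 : ι → A)
    (he0mem : ∀ i, e0 i ∈ evecIn F (Set.univ : Set A) (bb i) 0)
    (he0 : ∀ i, ∀ z ∈ evecIn F (Set.univ : Set A) (bb i) 0, e0 i * z = z) :
    ∀ i : ι, ∀ x : A, (e0 i + bb i) * x = x := by
  have hone : ∀ i j, Bf (e0 i + bb i) (bb j) = 1 := fun i j =>
    (hax i).form_zeroUnit_add_eq_one h2 hB (hax j)
      ((eq_or_ne i j).imp (fun h => congrArg bb h.symm) (hqd i j)) (he0mem i) (he0 i)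
  have hconst : ∀ i j, e0 i + bb i = e0 j + bb j := fun i j =>
    bb.eq_of_form_apply_eq hss fun k => by rw [hone, hone]
  intro i
  refine bb.mul_eq_self fun j => ?_
  rw [hconst i j, add_mul, mul_comm, (mem_evecIn_univ.mp (he0mem j)), zero_smul, (hax j).idem,
    zero_add]

open AxialPaper in
/-- Lemma `ed`: in a semisimple axial algebra of Jordan type 1/2 with a
quasi-definite basis `X` of primitive axes, if each `A_0(x_i)` has a unit `e_0(x_i)`,
then `e_0(x_i) + x_i` is a unit of `A` (for every `x_i ∈ X`). -/
theorem stmt17 {F : Type*} [Field F] {A : Type*} [NonUnitalNonAssocCommRing A]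
    [Module F A] [SMulCommClass F A A] [IsScalarTower F A A]
    (h2 : (2 : F) ≠ 0)
    (hA : IsAxialJordanHalf F A)
    (Bf : A →ₗ[F] A →ₗ[F] F) (hB : IsFrobeniusForm F Bf)
    (hss : ∀ x : A, (∀ v : A, Bf x v = 0) → x = 0)
    (ι : Type*) (bb : Module.Basis ι F A)
    (hax : ∀ i, IsPrimitiveAxis F (bb i))
    (hqd : ∀ i j, i ≠ j → Bf (bb i) (bb j) ≠ 1)
    (e0 : ι → A)
    (he0mem : ∀ i, e0 i ∈ evecIn F (Set.univ : Set A) (bb i) 0)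
    (he0 : ∀ i, ∀ z ∈ evecIn F (Set.univ : Set A) (bb i) 0, e0 i * z = z) :
    ∀ i : ι, ∀ x : A, (e0 i + bb i) * x = x :=
  stmt17_general h2 Bf hB hss ι bb hax hqd e0 he0mem he0
end
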